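/- arXiv:1306.0167 — 5 statements merged into one kernel-verified Lean document; each statement's English description precedes it below -/
import Mathlib

section
/- The range of the Takagi function on [0,1] is contained in [0, 2/3]. -/
open Set

/-- `phi x` is the distance from `x` to the nearest integer. -/
noncomputable def phi (x : ℝ) : ℝ := min (Int.fract x) (1 - Int.fract x)

/-- The Takagi function. -/
noncomputable def T (x : ℝ) : ℝ := ∑' n : ℕ, (1/2 : ℝ)^n * phi (2^n * x)

/-- The `j`-th binary digit of `x ∈ [0,1)` (terminating expansion for dyadics). -/
noncomputable def eps (x : ℝ) (j : ℕ) : ℤ := ⌊2^j * x⌋ % 2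

/-- `D k x = ∑_{j=1}^k (-1)^{ε_j(x)}`. -/
noncomputable def D (k : ℕ) (x : ℝ) : ℤ :=
  ∑ j ∈ Finset.Icc 1 k, (-1 : ℤ)^((eps x j).toNat)

/-- `x₀` is a balanced dyadic rational of order `m`. -/
def BalancedDyadic (m : ℕ) (x₀ : ℝ) : Prop :=
  x₀ ∈ Set.Ico (0:ℝ) 1 ∧ (∃ k : ℕ, x₀ = (k : ℝ) / 4^m) ∧ D (2*m) x₀ = 0

/-- The generation of a balanced dyadic rational of order `m`. -/
noncomputable def generation (m : ℕ) (x₀ : ℝ) : ℕ :=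
  ((Finset.Icc 1 (2*m)).filter (fun j => D j x₀ = 0)).card

/-- The local level set of `x`. -/
def LocalLevelSet (x : ℝ) : Set ℝ :=
  {x' ∈ Set.Ico (0:ℝ) 1 | ∀ j : ℕ, |D j x'| = |D j x|}

/-- The level set of `T` at level `y`. -/
def L (y : ℝ) : Set ℝ := {x ∈ Set.Icc (0:ℝ) 1 | T x = y}

lemma phi_nonneg (x : ℝ) : 0 ≤ phi x :=
  le_min (Int.fract_nonneg x) (by linarith [Int.fract_lt_one x])

lemma phi_le_half (x : ℝ) : phi x ≤ 1/2 := by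
  rcases le_total (Int.fract x) (1/2) with h | h
  · exact (min_le_left _ _).trans h
  · exact (min_le_right _ _).trans (by linarith)

lemma phi_key (y : ℝ) : phi y + (1/2) * phi (2*y) ≤ 1/2 := by
  unfold phi
  set t := Int.fract y with ht
  have h0 : 0 ≤ t := Int.fract_nonneg y
  have h1 : t < 1 := Int.fract_lt_one y
  have hfr : Int.fract (2*y) = Int.fract (2*t) := by
    have : (2:ℝ)*y = 2*t + ((2*⌊y⌋ : ℤ) : ℝ) := by push_cast; rw [ht, Int.fract]; ring
    rw [this, Int.fract_add_intCast]
  rcases lt_or_ge t (1/2) with h | h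
  · have h2 : Int.fract (2*t) = 2*t := Int.fract_eq_self.2 ⟨by linarith, by linarith⟩
    rw [hfr, h2]
    rcases le_total t (1/4) with h3 | h3
    · have := min_le_left t (1-t)
      have := min_le_left (2*t) (1-2*t)
      linarith
    · have := min_le_left t (1-t)
      have := min_le_right (2*t) (1-2*t)
      linarith
  · have h2 : Int.fract (2*t) = 2*t - 1 := by
      have : (2:ℝ)*t = (2*t - 1) + ((1:ℤ):ℝ) := by push_cast; ring
      rw [this, Int.fract_add_intCast, Int.fract_eq_self.2 ⟨by linarith, by linarith⟩]
      push_cast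
      ring
    rw [hfr, h2]
    rcases le_total t (3/4) with h3 | h3
    · have := min_le_right t (1-t)
      have := min_le_left (2*t-1) (1-(2*t-1))
      linarith
    · have := min_le_right t (1-t)
      have := min_le_right (2*t-1) (1-(2*t-1))
      linarith

lemma takagi_summable (x : ℝ) : Summable (fun n : ℕ => (1/2 : ℝ)^n * phi (2^n * x)) := by
  apply Summable.of_nonneg_of_le
    (fun n => mul_nonneg (by positivity) (phi_nonneg _))
    (fun n => ?_)
    (summable_geometric_of_lt_one (by norm_num) (by norm_num) : Summable fun n : ℕ => (1/2:ℝ)^n)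
  calc (1/2 : ℝ)^n * phi (2^n * x) ≤ (1/2)^n * (1/2) := by
        exact mul_le_mul_of_nonneg_left (phi_le_half _) (by positivity)
    _ ≤ (1/2)^n := by
        nlinarith [pow_nonneg (by norm_num : (0:ℝ) ≤ 1/2) n]

lemma takagi_le (x : ℝ) : T x ≤ 2/3 := by
  set f : ℕ → ℝ := fun n => (1/2 : ℝ)^n * phi (2^n * x) with hf
  have hsum := takagi_summable x
  have he : Summable fun k => f (2*k) :=
    hsum.comp_injective (fun a b hab => by omega)
  have ho : Summable fun k => f (2*k+1) :=
    hsum.comp_injective (fun a b hab => by omega)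
  have hT : T x = ∑' k : ℕ, (f (2*k) + f (2*k+1)) := by
    rw [Summable.tsum_add he ho, tsum_even_add_odd he ho]; rfl
  rw [hT]
  have hbound : ∀ k : ℕ, f (2*k) + f (2*k+1) ≤ (1/2) * (1/4:ℝ)^k := by
    intro k
    have h1 : ((1:ℝ)/2)^(2*k) = (1/4:ℝ)^k := by
      rw [pow_mul]; norm_num
    have h2 : ((1:ℝ)/2)^(2*k+1) = (1/4:ℝ)^k * (1/2) := by
      rw [pow_succ, pow_mul]; norm_num
    have h3 : (2:ℝ)^(2*k) * x = 4^k * x := by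
      rw [pow_mul]; norm_num
    have h4 : (2:ℝ)^(2*k+1) * x = 2 * (4^k * x) := by
      rw [pow_succ, pow_mul]; ring_nf
    have hk := phi_key ((4:ℝ)^k * x)
    have hp : (0:ℝ) ≤ (1/4:ℝ)^k := by positivity
    simp only [hf, h1, h2, h3, h4]
    nlinarith
  calc ∑' k : ℕ, (f (2*k) + f (2*k+1)) ≤ ∑' k : ℕ, (1/2) * (1/4:ℝ)^k := by
        apply Summable.tsum_le_tsum hbound (he.add ho)
        exact (summable_geometric_of_lt_one (by norm_num) (by norm_num)).mul_left _
    _ = 2/3 := by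
        rw [tsum_mul_left, tsum_geometric_of_lt_one (by norm_num) (by norm_num)]
        norm_num

lemma takagi_nonneg (x : ℝ) : 0 ≤ T x :=
  tsum_nonneg fun n => mul_nonneg (by positivity) (phi_nonneg _)

theorem takagi_range_subset :
    T '' Set.Icc (0:ℝ) 1 ⊆ Set.Icc (0:ℝ) (2/3) := by
  rintro _ ⟨x, -, rfl⟩
  exact ⟨takagi_nonneg x, takagi_le x⟩
end

section
/- Each local level set L_x^loc = {x' ∈ [0,1) : |D_j(x') | = |D_j(x)| for all j} is a closed subset of [0,1). -/
open Set

lemma eps_mem (y : ℝ) (j : ℕ) : eps y j = 0 ∨ eps y j = 1 := by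
  unfold eps; omega

lemma floor_succ (y : ℝ) (j : ℕ) :
    ⌊(2:ℝ)^(j+1) * y⌋ = 2 * ⌊(2:ℝ)^j * y⌋ + eps y (j+1) := by
  have h1 : (2:ℝ)^(j+1) * y = 2 * ((2:ℝ)^j * y) := by ring
  set t := (2:ℝ)^j * y
  have hf : (⌊t⌋ : ℝ) ≤ t := Int.floor_le t
  have hf' : t < ⌊t⌋ + 1 := Int.lt_floor_add_one t
  have hb1 : 2 * ⌊t⌋ ≤ ⌊2 * t⌋ := by
    apply Int.le_floor.2; push_cast; linarith
  have hb2 : ⌊2 * t⌋ < 2 * ⌊t⌋ + 2 := by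
    apply Int.floor_lt.2; push_cast; linarith
  have he : eps y (j+1) = ⌊2 * t⌋ % 2 := by
    unfold eps; rw [h1]
  rw [h1]; omega

lemma D_succ (y : ℝ) (j : ℕ) : D (j+1) y = D j y + (-1 : ℤ)^((eps y (j+1)).toNat) := by
  unfold D
  rw [Finset.sum_Icc_succ_top (by omega)]

lemma D_congr {y z : ℝ} {j : ℕ} (h : ∀ i, 1 ≤ i → i ≤ j → eps y i = eps z i) :
    D j y = D j z := by
  unfold D
  apply Finset.sum_congr rfl
  intro i hi
  rw [Finset.mem_Icc] at hi
  rw [h i hi.1 hi.2]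

lemma no_all_ones (y : ℝ) (K : ℕ) : ¬ (∀ i, K < i → eps y i = 1) := by
  intro h
  have key : ∀ t : ℕ, (⌊(2:ℝ)^(K+t) * y⌋ + 1) = 2^t * (⌊(2:ℝ)^K * y⌋ + 1) := by
    intro t
    induction t with
    | zero => simp
    | succ n ih =>
      have := floor_succ y (K + n)
      have he := h (K + n + 1) (by omega)
      rw [he] at this
      have : ⌊(2:ℝ)^(K+(n+1)) * y⌋ = 2 * ⌊(2:ℝ)^(K+n) * y⌋ + 1 := by
        rw [show K + (n+1) = (K+n) + 1 from rfl, this]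
      rw [this, pow_succ]
      linarith [ih]
  -- now derive contradiction
  set c : ℝ := (⌊(2:ℝ)^K * y⌋ + 1) - (2:ℝ)^K * y with hc
  have hc0 : 0 < c := by
    have := Int.lt_floor_add_one ((2:ℝ)^K * y)
    simp only [hc]; push_cast; linarith
  obtain ⟨t, ht⟩ := exists_pow_lt_of_lt_one hc0 (by norm_num : (1/2:ℝ) < 1)
  have h1 : ((⌊(2:ℝ)^(K+t) * y⌋ : ℝ) + 1) = 2^t * (⌊(2:ℝ)^K * y⌋ + 1) := by
    exact_mod_cast key t
  have h2 : (⌊(2:ℝ)^(K+t) * y⌋ : ℝ) ≤ (2:ℝ)^(K+t) * y := Int.floor_le _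
  have h3 : (2:ℝ)^(K+t) * y = 2^t * ((2:ℝ)^K * y) := by rw [pow_add]; ring
  have hp : (0:ℝ) < 2^t := by positivity
  have : (2:ℝ)^t * (⌊(2:ℝ)^K * y⌋ + 1) ≤ 2^t * ((2:ℝ)^K * y) + 1 := by
    rw [← h1, ← h3]; linarith
  have h4 : (2:ℝ)^t * c ≤ 1 := by
    rw [hc]; nlinarith [this]
  have h5 : (1:ℝ) < 2^t * c := by
    have : (2:ℝ)^t * ((1/2:ℝ)^t) = 1 := by
      rw [← mul_pow]; norm_num
    nlinarith [ht, hp]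
  linarith

lemma mem_of_digits {x z : ℝ} (hz : z ∈ Set.Ico (0:ℝ) 1)
    (hd : ∀ j : ℕ, ∃ y ∈ LocalLevelSet x, ∀ i, 1 ≤ i → i ≤ j → eps y i = eps z i) :
    z ∈ LocalLevelSet x := by
  refine ⟨hz, fun j => ?_⟩
  obtain ⟨y, hyS, hdig⟩ := hd j
  rw [← D_congr hdig]
  exact hyS.2 j

lemma floor_eq_right {z y : ℝ} {i : ℕ} (hzy : z ≤ y)
    (h : (2:ℝ)^i * y < ⌊(2:ℝ)^i * z⌋ + 1) : ⌊(2:ℝ)^i * y⌋ = ⌊(2:ℝ)^i * z⌋ := by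
  apply Int.floor_eq_iff.2
  constructor
  · exact le_trans (Int.floor_le _) (by nlinarith [pow_pos (by norm_num : (0:ℝ) < 2) i])
  · exact_mod_cast h

lemma floor_eq_left {z y : ℝ} {i : ℕ} (hzy : y ≤ z)
    (h : (⌊(2:ℝ)^i * z⌋ : ℝ) ≤ (2:ℝ)^i * y) : ⌊(2:ℝ)^i * y⌋ = ⌊(2:ℝ)^i * z⌋ := by
  apply Int.floor_eq_iff.2
  refine ⟨h, ?_⟩
  calc (2:ℝ)^i * y ≤ (2:ℝ)^i * z := by nlinarith [pow_pos (by norm_num : (0:ℝ) < 2) i]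
    _ < ⌊(2:ℝ)^i * z⌋ + 1 := Int.lt_floor_add_one _

lemma caseB2 (x z : ℝ) (hz : z ∈ Set.Ico (0:ℝ) 1)
    (hbelow : ∀ ε > (0:ℝ), ∃ y ∈ LocalLevelSet x, z - ε < y ∧ y < z)
    (hdy : ∃ i : ℕ, Int.fract ((2:ℝ)^i * z) = 0) : False := by
  -- z is positive
  have hz0 : 0 < z := by
    obtain ⟨y, hyS, _, hyz⟩ := hbelow 1 one_pos
    exact lt_of_le_of_lt hyS.1.1 hyz
  classical
  set N := Nat.find hdy with hNdef
  have hN : Int.fract ((2:ℝ)^N * z) = 0 := Nat.find_spec hdy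
  have hmin : ∀ i < N, Int.fract ((2:ℝ)^i * z) ≠ 0 := fun i hi => Nat.find_min hdy hi
  have hN1 : 1 ≤ N := by
    rcases Nat.eq_zero_or_pos N with h0 | h1
    · exfalso
      rw [h0] at hN
      simp only [pow_zero, one_mul] at hN
      rw [Int.fract_eq_self.2 ⟨le_of_lt hz0, hz.2⟩] at hN
      linarith
    · exact h1
  set m := ⌊(2:ℝ)^N * z⌋ with hmdef
  have hm : (2:ℝ)^N * z = m := by
    have : Int.fract ((2:ℝ)^N * z) = (2:ℝ)^N * z - m := by rw [Int.fract, hmdef]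
    linarith [this ▸ hN]
  have hmpos : 0 < m := by
    have : (0:ℝ) < (2:ℝ)^N * z := by positivity
    exact_mod_cast hm ▸ this
  have hmodd : m % 2 = 1 := by
    by_contra hodd
    have h2 : m % 2 = 0 := by omega
    obtain ⟨k, hk⟩ : ∃ k, m = 2 * k := ⟨m / 2, by omega⟩
    apply hmin (N - 1) (by omega)
    have hNe : N = (N - 1) + 1 := by omega
    have : (2:ℝ)^(N-1) * z = (k : ℝ) := by
      have h3 : (2:ℝ)^N = 2 * (2:ℝ)^(N-1) := by
        conv_lhs => rw [hNe]
        rw [pow_succ]; ring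
      rw [h3, hk] at hm
      push_cast at hm
      linarith
    rw [this, Int.fract_intCast]
  -- fract lower bound below N
  have hfr : ∀ i < N, ((2:ℝ)^(N - i))⁻¹ ≤ Int.fract ((2:ℝ)^i * z) := by
    intro i hi
    set u := Int.fract ((2:ℝ)^i * z) with hu
    have hu0 : 0 < u := lt_of_le_of_ne (Int.fract_nonneg _) (Ne.symm (hmin i hi))
    have hueq : u = (2:ℝ)^i * z - ⌊(2:ℝ)^i * z⌋ := by rw [hu, Int.fract]
    set c : ℤ := m - 2^(N-i) * ⌊(2:ℝ)^i * z⌋ with hc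
    have hcr : (c:ℝ) = (2:ℝ)^(N-i) * u := by
      rw [hc, hueq]
      push_cast
      have hNe : (2:ℝ)^(N-i) * (2:ℝ)^i = (2:ℝ)^N := by
        rw [← pow_add]; congr 1; omega
      rw [← hm]
      nlinarith [hNe]
    have hc0 : 0 < c := by
      have : (0:ℝ) < (c:ℝ) := by rw [hcr]; positivity
      exact_mod_cast this
    have hc1 : (1:ℝ) ≤ (c:ℝ) := by exact_mod_cast hc0
    rw [hcr] at hc1
    rw [inv_le_iff_one_le_mul₀ (by positivity)]
    linarith [hc1]
  -- digit structure of points just below z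
  have digits : ∀ K : ℕ, N ≤ K → ∀ y : ℝ, z - ((2:ℝ)^K)⁻¹ < y → y < z →
      (∀ i, 1 ≤ i → i < N → eps y i = eps z i) ∧
      (∀ t : ℕ, N + t ≤ K → ⌊(2:ℝ)^(N+t) * y⌋ = 2^t * m - 1) := by
    intro K hK y hy1 hy2
    constructor
    · intro i h1i hiN
      have hfl : ⌊(2:ℝ)^i * y⌋ = ⌊(2:ℝ)^i * z⌋ := by
        apply floor_eq_left (le_of_lt hy2)
        have hfr' := hfr i hiN
        have hflo : (⌊(2:ℝ)^i * z⌋ : ℝ) = (2:ℝ)^i * z - Int.fract ((2:ℝ)^i * z) := by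
          rw [Int.fract]; ring
        have hpow : (0:ℝ) < (2:ℝ)^i := by positivity
        have hstep : (2:ℝ)^i * ((2:ℝ)^K)⁻¹ ≤ ((2:ℝ)^(N-i))⁻¹ := by
          have e1 : (2:ℝ)^i * (2:ℝ)^(N-i) = 2^N := by
            rw [← pow_add]; congr 1; omega
          have e2 : (2:ℝ)^N ≤ 2^K := pow_le_pow_right₀ (by norm_num) hK
          rw [inv_eq_one_div, inv_eq_one_div, mul_one_div,
            div_le_div_iff₀ (by positivity) (by positivity)]
          nlinarith [e1, e2]
        have : (2:ℝ)^i * y > (2:ℝ)^i * z - (2:ℝ)^i * ((2:ℝ)^K)⁻¹ := by nlinarith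
        rw [hflo]
        nlinarith [hfr i hiN]
      unfold eps; rw [hfl]
    · intro t htK
      have hval : (2:ℝ)^(N+t) * z = (2:ℝ)^t * (m:ℝ) := by
        rw [pow_add, mul_comm ((2:ℝ)^N) _, mul_assoc, hm]
      apply Int.floor_eq_iff.2
      constructor
      · push_cast
        have hpow : (0:ℝ) < (2:ℝ)^(N+t) := by positivity
        have hstep : (2:ℝ)^(N+t) * ((2:ℝ)^K)⁻¹ ≤ 1 := by
          rw [mul_inv_le_iff₀ (by positivity), one_mul]
          exact pow_le_pow_right₀ (by norm_num) htK
        have h5 : (2:ℝ)^(N+t) * y > (2:ℝ)^(N+t) * z - (2:ℝ)^(N+t) * ((2:ℝ)^K)⁻¹ := by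
          nlinarith
        linarith [hval, hstep, h5]
      · push_cast
        have hpow : (0:ℝ) < (2:ℝ)^(N+t) := by positivity
        have h5 : (2:ℝ)^(N+t) * y < (2:ℝ)^(N+t) * z :=
          mul_lt_mul_of_pos_left hy2 hpow
        linarith [hval, h5]
  -- digit values
  have hepsy : ∀ K : ℕ, N ≤ K → ∀ y : ℝ, z - ((2:ℝ)^K)⁻¹ < y → y < z →
      (∀ i, 1 ≤ i → i < N → eps y i = eps z i) ∧ eps y N = 0 ∧
      (∀ t : ℕ, 1 ≤ t → N + t ≤ K → eps y (N + t) = 1) := by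
    intro K hK y hy1 hy2
    obtain ⟨h1, h2⟩ := digits K hK y hy1 hy2
    refine ⟨h1, ?_, ?_⟩
    · have hf := h2 0 (by omega)
      simp only [pow_zero, one_mul, Nat.add_zero] at hf
      unfold eps
      rw [hf]
      omega
    · intro t ht htK
      have hf := h2 t htK
      have hev : (2:ℤ)^t * m % 2 = 0 := by
        have h5 : (2:ℤ)^t = 2 * 2^(t-1) := by
          rw [← pow_succ']; congr 1; omega
        rw [h5, mul_assoc]
        exact Int.mul_emod_right _ _
      unfold eps
      rw [hf]
      generalize hM : (2:ℤ)^t * m = M at hev ⊢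
      omega
  set a := D (N-1) z with hadef
  have hDy : ∀ K : ℕ, N ≤ K → ∀ y : ℝ, z - ((2:ℝ)^K)⁻¹ < y → y < z →
      ∀ t : ℕ, N + t ≤ K → D (N + t) y = a + 1 - t := by
    intro K hK y hy1 hy2
    obtain ⟨h1, h2, h3⟩ := hepsy K hK y hy1 hy2
    have hNy : D N y = a + 1 := by
      have hNe : N = (N - 1) + 1 := by omega
      have hstep : D ((N-1)+1) y = D (N-1) y + (-1:ℤ)^((eps y ((N-1)+1)).toNat) := D_succ y (N-1)
      have hcong : D (N-1) y = D (N-1) z := D_congr (fun i hi1 hi2 => h1 i hi1 (by omega))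
      rw [← hNe] at hstep
      rw [hstep, hcong, ← hadef, h2]
      norm_num
    intro t htK
    induction t with
    | zero => simpa using hNy
    | succ n ih =>
      have hstep : D ((N+n)+1) y = D (N+n) y + (-1:ℤ)^((eps y ((N+n)+1)).toNat) := D_succ y (N+n)
      have heps1 : eps y (N + (n+1)) = 1 := h3 (n+1) (by omega) htK
      rw [show N + (n+1) = (N+n)+1 from rfl] at heps1 ⊢
      rw [hstep, heps1, ih (by omega)]
      push_cast
      ring
  -- the absolute values of D j x for j ≥ N
  have hr : ∀ s : ℕ, |D (N + s) x| = |a + 1 - (s:ℤ)| := by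
    intro s
    have hpos : (0:ℝ) < ((2:ℝ)^(N+s))⁻¹ := by positivity
    obtain ⟨y, hyS, hy1, hy2⟩ := hbelow ((2:ℝ)^(N+s))⁻¹ hpos
    have := hDy (N+s) (by omega) y hy1 hy2 s (le_refl _)
    rw [← hyS.2 (N+s), this]
  -- the contradiction point
  set A := a.toNat with hAdef
  have haA : a ≤ (A:ℤ) := Int.self_le_toNat a
  set J0 := N + (A + 2) with hJ0def
  have hpos : (0:ℝ) < ((2:ℝ)^J0)⁻¹ := by positivity
  obtain ⟨y, hyS, hy1, hy2⟩ := hbelow ((2:ℝ)^J0)⁻¹ hpos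
  have hkey : ∀ t : ℕ, D (J0 + t) y = a + 1 - ((A:ℤ) + 2 + t) ∧
      (0 < t → eps y (J0 + t) = 1) := by
    intro t
    induction t with
    | zero =>
      refine ⟨?_, fun h => absurd h (lt_irrefl 0)⟩
      have h9 := hDy J0 (by omega) y hy1 hy2 (A+2) (le_refl _)
      rw [← hJ0def] at h9
      rw [Nat.add_zero, h9]
      push_cast
      ring
    | succ n ih =>
      have hstep : D ((J0+n)+1) y = D (J0+n) y + (-1:ℤ)^((eps y ((J0+n)+1)).toNat) :=
        D_succ y (J0+n)
      have habs : |D ((J0+n)+1) y| = |a + 1 - ((A:ℤ) + 2 + n + 1)| := by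
        have h1 := hyS.2 ((J0+n)+1)
        have h2 := hr (A + 2 + n + 1)
        rw [show N + (A + 2 + n + 1) = (J0 + n) + 1 by omega] at h2
        rw [h1, h2]
        push_cast
        ring_nf
      set c : ℤ := a + 1 - ((A:ℤ) + 2 + n) with hcdef
      have hc1 : c ≤ -1 := by omega
      rcases eps_mem y ((J0+n)+1) with he | he
      · exfalso
        rw [he] at hstep
        simp only [Int.toNat_zero, pow_zero] at hstep
        rw [show a + 1 - ((A:ℤ) + 2 + (n:ℤ) + 1) = c - 1 by omega] at habs
        rw [abs_of_nonpos (by omega), abs_of_nonpos (by omega)] at habs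
        omega
      · rw [he] at hstep
        simp only [Int.toNat_one, pow_one] at hstep
        refine ⟨?_, fun _ => ?_⟩
        · rw [show J0 + (n+1) = (J0+n)+1 from rfl, hstep, ih.1]
          push_cast
          ring
        · rw [show J0 + (n+1) = (J0+n)+1 from rfl]
          exact he
  apply no_all_ones y J0
  intro i hi
  have := (hkey (i - J0)).2 (by omega)
  rwa [show J0 + (i - J0) = i by omega] at this


lemma mem_of_closure (x z : ℝ) (hz : z ∈ Set.Ico (0:ℝ) 1)
    (hcl : z ∈ closure (LocalLevelSet x)) : z ∈ LocalLevelSet x := by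
  have hcl' : ∀ ε > (0:ℝ), ∃ y ∈ LocalLevelSet x, |y - z| < ε := by
    intro ε hε
    obtain ⟨y, hy, hd⟩ := Metric.mem_closure_iff.1 hcl ε hε
    exact ⟨y, hy, by rw [abs_sub_comm]; exact hd⟩
  by_cases hA : ∀ ε > (0:ℝ), ∃ y ∈ LocalLevelSet x, z ≤ y ∧ y < z + ε
  · -- approached from the right (or equal): digits stabilize
    apply mem_of_digits hz
    intro j
    set g : ℕ → ℝ := fun i => ((2:ℝ)^i)⁻¹ * (1 - Int.fract ((2:ℝ)^i * z)) with hg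
    have hgpos : ∀ i, 0 < g i := by
      intro i
      have h1 : Int.fract ((2:ℝ)^i * z) < 1 := Int.fract_lt_one _
      have h2 : (0:ℝ) < ((2:ℝ)^i)⁻¹ := by positivity
      simp only [hg]; nlinarith
    have hne : (Finset.range (j+1)).Nonempty := ⟨0, by simp⟩
    set δ := (Finset.range (j+1)).inf' hne g with hδdef
    have hδpos : 0 < δ := by
      rw [hδdef, Finset.lt_inf'_iff]
      exact fun i _ => hgpos i
    obtain ⟨y, hyS, hzy, hyδ⟩ := hA δ hδpos
    refine ⟨y, hyS, fun i h1i hij => ?_⟩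
    have hgi : δ ≤ g i := Finset.inf'_le _ (Finset.mem_range.2 (by omega))
    have hfl : ⌊(2:ℝ)^i * y⌋ = ⌊(2:ℝ)^i * z⌋ := by
      apply floor_eq_right hzy
      have hpow : (0:ℝ) < (2:ℝ)^i := by positivity
      have h2 : (2:ℝ)^i * y < (2:ℝ)^i * z + (2:ℝ)^i * g i := by nlinarith
      have h3 : (2:ℝ)^i * g i = 1 - Int.fract ((2:ℝ)^i * z) := by
        rw [hg]; field_simp
      have h4 : Int.fract ((2:ℝ)^i * z) = (2:ℝ)^i * z - ⌊(2:ℝ)^i * z⌋ := by rw [Int.fract]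
      rw [h3, h4] at h2; linarith
    unfold eps; rw [hfl]
  · -- approached strictly from below
    push_neg at hA
    obtain ⟨ε₀, hε₀, hA⟩ := hA
    have hbelow : ∀ ε > (0:ℝ), ∃ y ∈ LocalLevelSet x, z - ε < y ∧ y < z := by
      intro ε hε
      obtain ⟨y, hyS, hyd⟩ := hcl' (min ε ε₀) (lt_min hε hε₀)
      have h1 : |y - z| < ε := lt_of_lt_of_le hyd (min_le_left _ _)
      have h2 : |y - z| < ε₀ := lt_of_lt_of_le hyd (min_le_right _ _)
      rw [abs_lt] at h1 h2
      have hlt : y < z := by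
        by_contra hge
        push_neg at hge
        exact absurd (hA y hyS hge) (by push_neg; linarith)
      exact ⟨y, hyS, by linarith, hlt⟩
    by_cases hdy : ∃ i : ℕ, Int.fract ((2:ℝ)^i * z) = 0
    · exact absurd (caseB2 x z hz hbelow hdy) id
    · -- non-dyadic: digits stabilize from the left
      push_neg at hdy
      apply mem_of_digits hz
      intro j
      set g : ℕ → ℝ := fun i => ((2:ℝ)^i)⁻¹ * Int.fract ((2:ℝ)^i * z) with hg
      have hgpos : ∀ i, 0 < g i := by
        intro i
        have h1 : 0 ≤ Int.fract ((2:ℝ)^i * z) := Int.fract_nonneg _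
        have h1' : Int.fract ((2:ℝ)^i * z) ≠ 0 := hdy i
        have h2 : (0:ℝ) < ((2:ℝ)^i)⁻¹ := by positivity
        have : 0 < Int.fract ((2:ℝ)^i * z) := lt_of_le_of_ne h1 (Ne.symm h1')
        simp only [hg]; positivity
      have hne : (Finset.range (j+1)).Nonempty := ⟨0, by simp⟩
      set δ := (Finset.range (j+1)).inf' hne g with hδdef
      have hδpos : 0 < δ := by
        rw [hδdef, Finset.lt_inf'_iff]
        exact fun i _ => hgpos i
      obtain ⟨y, hyS, hyδ, hyz⟩ := hbelow δ hδpos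
      refine ⟨y, hyS, fun i h1i hij => ?_⟩
      have hgi : δ ≤ g i := Finset.inf'_le _ (Finset.mem_range.2 (by omega))
      have hfl : ⌊(2:ℝ)^i * y⌋ = ⌊(2:ℝ)^i * z⌋ := by
        apply floor_eq_left (le_of_lt hyz)
        have hpow : (0:ℝ) < (2:ℝ)^i := by positivity
        have h2 : (2:ℝ)^i * z - (2:ℝ)^i * g i ≤ (2:ℝ)^i * y := by nlinarith
        have h3 : (2:ℝ)^i * g i = Int.fract ((2:ℝ)^i * z) := by
          rw [hg]; field_simp
        have h4 : Int.fract ((2:ℝ)^i * z) = (2:ℝ)^i * z - ⌊(2:ℝ)^i * z⌋ := by rw [Int.fract]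
        rw [h3, h4] at h2; linarith
      unfold eps; rw [hfl]

theorem local_level_set_closed (x : ℝ) (hx : x ∈ Set.Ico (0:ℝ) 1) :
    IsClosed (Subtype.val ⁻¹' LocalLevelSet x : Set (Set.Ico (0:ℝ) 1)) := by
  have hset : (Subtype.val ⁻¹' LocalLevelSet x : Set (Set.Ico (0:ℝ) 1)) =
      Subtype.val ⁻¹' closure (LocalLevelSet x) := by
    ext ⟨z, hzi⟩
    simp only [Set.mem_preimage]
    exact ⟨fun h => subset_closure h, fun h => mem_of_closure x z hzi h⟩
  rw [hset]
  exact isClosed_closure.preimage continuous_subtype_val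
end

section
/- If D_j(x) = 0 for only finitely many j, then the local level set L_x^loc is finite; if D_j(x) = 0 for infinitely many j, then L_x^loc is uncountable. -/
open Set

/-!
The walk `k ↦ D k x` has steps `(-1)^εⱼ`, so `x' ∈ L_x^loc` exactly when the walk of `x'` is the
walk of `x` with the sign of each excursion away from `0` chosen independently. If the walk of `x`
has a last zero, the sign is constant afterwards and `x'` is determined by finitely many digits. If
it returns to `0` infinitely often, every choice of signs `ℕ → Bool` gives a walk that still
returns to `0` infinitely often, hence a digit sequence that is not eventually `1`, hence a
distinct point of `[0, 1)` with that walk.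
-/

namespace Real

variable {b : ℕ}

theorem natCast_mul_ofDigits [NeZero b] (a : ℕ → Fin b) :
    b * ofDigits a = a 0 + ofDigits (fun i ↦ a (i + 1)) := by
  rw [ofDigits_eq_sum_add_ofDigits a 1]
  simp [ofDigitsTerm]
  field_simp [NeZero.ne b]

theorem exists_pow_succ_mul_ofDigits [NeZero b] (a : ℕ → Fin b) (n : ℕ) :
    ∃ m : ℕ, (b : ℝ) ^ (n + 1) * ofDigits a = b * m + a n + ofDigits (fun i ↦ a (i + (n + 1))) := by
  induction n with
  | zero => exact ⟨0, by simpa using natCast_mul_ofDigits a⟩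
  | succ n ih =>
    obtain ⟨m, hm⟩ := ih
    refine ⟨b * m + a n, ?_⟩
    have htail := natCast_mul_ofDigits (fun i ↦ a (i + (n + 1)))
    rw [show (fun i ↦ a (i + 1 + (n + 1))) = fun i ↦ a (i + (n + 1 + 1)) from
      funext fun i ↦ congrArg a (by omega), zero_add] at htail
    rw [pow_succ', mul_assoc, hm]
    push_cast
    linear_combination htail

theorem ofDigits_lt_one {a : ℕ → Fin b} {n : ℕ} (hn : (a n : ℕ) < b - 1) : ofDigits a < 1 := by
  have hb : 1 < b := by omega
  rw [← ofDigits_const_last_eq_one' hb]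
  refine Summable.tsum_lt_tsum (i := n) (fun i ↦ ?_) ?_ summable_ofDigitsTerm summable_ofDigitsTerm
  · unfold ofDigitsTerm
    gcongr
    exact_mod_cast Nat.le_sub_one_of_lt (a i).isLt
  · unfold ofDigitsTerm
    gcongr

theorem digits_ofDigits [NeZero b] {a : ℕ → Fin b} (ha : ∀ N, ∃ n ≥ N, (a n : ℕ) < b - 1) :
    digits (ofDigits a) b = a := by
  funext n
  obtain ⟨m, hm⟩ := exists_pow_succ_mul_ofDigits a n
  obtain ⟨k, hk, hak⟩ := ha (n + 1)
  have htail : ofDigits (fun i ↦ a (i + (n + 1))) < 1 :=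
    ofDigits_lt_one (n := k - (n + 1)) (by rwa [Nat.sub_add_cancel hk])
  have hfloor : ⌊ofDigits a * b ^ (n + 1)⌋₊ = b * m + a n := by
    have hcast : (b : ℝ) * m + a n = ((b * m + a n : ℕ) : ℝ) := by push_cast; rfl
    rw [mul_comm, hm, hcast, add_comm, Nat.floor_add_natCast (ofDigits_nonneg _),
      Nat.floor_eq_zero.2 htail, zero_add]
  ext
  simp [digits, hfloor, Nat.mod_eq_of_lt (a n).isLt]

theorem injOn_digits (hb : 1 < b) [NeZero b] : InjOn (digits · b) (Ico 0 1) :=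
  LeftInvOn.injOn fun _ hx ↦ ofDigits_digits hb hx

end Real

theorem eps_succ_eq_digits {x : ℝ} (hx : 0 ≤ x) (n : ℕ) :
    eps x (n + 1) = (Real.digits x 2 n : ℕ) := by
  rw [eps, ← Int.natCast_floor_eq_floor (by positivity), mul_comm]
  simp [Real.digits]

def digitWalk (a : ℕ → Fin 2) (k : ℕ) : ℤ :=
  ∑ n ∈ Finset.range k, (-1) ^ (a n : ℕ)

@[simp]
theorem digitWalk_zero (a : ℕ → Fin 2) : digitWalk a 0 = 0 := rfl

theorem digitWalk_succ (a : ℕ → Fin 2) (k : ℕ) :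
    digitWalk a (k + 1) = digitWalk a k + (-1) ^ (a k : ℕ) :=
  Finset.sum_range_succ _ _

theorem D_eq_digitWalk {x : ℝ} (hx : 0 ≤ x) (k : ℕ) : D k x = digitWalk (Real.digits x 2) k := by
  induction k with
  | zero => simp [D]
  | succ k ih =>
    rw [D, Finset.sum_Icc_succ_top (by omega), ← D, ih, digitWalk_succ, eps_succ_eq_digits hx,
      Int.toNat_natCast]

theorem eq_of_abs_add_neg_one_pow_eq {v : ℤ} (hv : v ≠ 0) {i j : Fin 2}
    (h : |v + (-1) ^ (i : ℕ)| = |v + (-1) ^ (j : ℕ)|) : i = j := by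
  fin_cases i <;> fin_cases j <;> simp at h ⊢ <;> rcases abs_eq_abs.1 h with h | h <;> omega

theorem eq_of_abs_digitWalk_eq {w a a' : ℕ → Fin 2} {N : ℕ} (hw : ∀ k > N, digitWalk w k ≠ 0)
    (ha : ∀ k, |digitWalk a k| = |digitWalk w k|) (ha' : ∀ k, |digitWalk a' k| = |digitWalk w k|)
    (h : ∀ n ≤ N, a n = a' n) : a = a' := by
  funext n
  induction n using Nat.strong_induction_on with
  | _ n ih =>
    rcases le_or_gt n N with hn | hn
    · exact h n hn
    have hv : digitWalk a n = digitWalk a' n :=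
      Finset.sum_congr rfl fun i hi ↦ by rw [ih i (Finset.mem_range.1 hi)]
    refine eq_of_abs_add_neg_one_pow_eq (v := digitWalk a n) ?_ ?_
    · rw [← abs_ne_zero, ha]
      exact abs_ne_zero.2 (hw n hn)
    · rw [← digitWalk_succ, hv, ← digitWalk_succ, ha, ha']

theorem finite_setOf_abs_digitWalk_eq {w : ℕ → Fin 2} (hw : {k | digitWalk w k = 0}.Finite) :
    {a : ℕ → Fin 2 | ∀ k, |digitWalk a k| = |digitWalk w k|}.Finite := by
  obtain ⟨N, hN⟩ := hw.bddAbove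
  refine Set.Finite.of_injOn (f := fun a (n : Fin (N + 1)) ↦ a n) (mapsTo_univ _ _) ?_ finite_univ
  intro a ha a' ha' h
  exact eq_of_abs_digitWalk_eq (fun k hk h0 ↦ absurd hk (not_lt.2 (hN h0))) ha ha'
    fun n hn ↦ congrFun h ⟨n, Nat.lt_succ_of_le hn⟩

theorem exists_ge_eq_zero_of_digitWalk_zeros_infinite {a : ℕ → Fin 2}
    (ha : {k | digitWalk a k = 0}.Infinite) (N : ℕ) : ∃ n ≥ N, a n = 0 := by
  by_contra! hone
  obtain ⟨k₁, hk₁, hNk₁⟩ := ha.exists_gt N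
  obtain ⟨k₂, hk₂, hk₁₂⟩ := ha.exists_gt k₁
  have hdescent : digitWalk a k₂ - digitWalk a k₁ = -((k₂ - k₁ : ℕ) : ℤ) := by
    rw [digitWalk, digitWalk, ← Finset.sum_Ico_eq_sub _ hk₁₂.le,
      Finset.sum_congr rfl (g := fun _ ↦ -1) fun n hn ↦ ?_]
    · simp
    · have hn := Finset.mem_Ico.1 hn
      have : (a n : ℕ) = 1 := by have := hone n (by omega); omega
      simp [this]
  simp only [mem_ofPred_eq] at hk₁ hk₂
  omega

/-- The number of returns of the walk to `0` at times `1, …, n`, i.e. the index of the excursion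
containing step `n`. -/
def excursionIndex (w : ℕ → Fin 2) (n : ℕ) : ℕ :=
  Nat.count (fun k ↦ digitWalk w (k + 1) = 0) n

def flipExcursions (w : ℕ → Fin 2) (b : ℕ → Bool) (n : ℕ) : Fin 2 :=
  if b (excursionIndex w n) then (w n).rev else w n

theorem digitWalk_flipExcursions (w : ℕ → Fin 2) (b : ℕ → Bool) (k : ℕ) :
    digitWalk (flipExcursions w b) k =
      (if b (excursionIndex w k) then -1 else 1) * digitWalk w k := by
  induction k with
  | zero => simp
  | succ k ih =>
    have hstep : (-1 : ℤ) ^ (flipExcursions w b k : ℕ) =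
        (if b (excursionIndex w k) then -1 else 1) * (-1) ^ (w k : ℕ) := by
      unfold flipExcursions
      split_ifs <;> rcases Fin.exists_fin_two.1 ⟨w k, rfl⟩ with h | h <;> simp [h]
    rw [digitWalk_succ, ih, hstep, ← mul_add, ← digitWalk_succ]
    by_cases hz : digitWalk w (k + 1) = 0
    · simp [hz]
    · rw [excursionIndex, excursionIndex, Nat.count_succ, if_neg hz, add_zero]

theorem abs_digitWalk_flipExcursions (w : ℕ → Fin 2) (b : ℕ → Bool) (k : ℕ) :
    |digitWalk (flipExcursions w b) k| = |digitWalk w k| := by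
  rw [digitWalk_flipExcursions, abs_mul]
  split_ifs <;> simp

theorem flipExcursions_injective {w : ℕ → Fin 2} (hw : {k | digitWalk w k = 0}.Infinite) :
    Function.Injective (flipExcursions w) := by
  have hreturns : {k | digitWalk w (k + 1) = 0}.Infinite := by
    refine Set.infinite_of_forall_exists_gt fun n ↦ ?_
    obtain ⟨m, hm, hnm⟩ := hw.exists_gt (n + 1)
    exact ⟨m - 1, by simpa [Nat.sub_add_cancel (by omega : 1 ≤ m)] using hm, by omega⟩
  intro b b' h
  funext i
  have hi : excursionIndex w (Nat.nth _ i) = i := Nat.count_nth_of_infinite hreturns i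
  have := congrFun h (Nat.nth (fun k ↦ digitWalk w (k + 1) = 0) i)
  simp only [flipExcursions, hi] at this
  have hrev : ∀ c : Fin 2, c.rev ≠ c := by decide
  cases hb : b i <;> cases hb' : b' i <;> simp [hb, hb', hrev, (hrev _).symm] at this ⊢

theorem exists_ge_flipExcursions_eq_zero {w : ℕ → Fin 2} (hw : {k | digitWalk w k = 0}.Infinite)
    (b : ℕ → Bool) (N : ℕ) : ∃ n ≥ N, flipExcursions w b n = 0 := by
  refine exists_ge_eq_zero_of_digitWalk_zeros_infinite ?_ N
  convert hw using 1
  exact Set.ext fun k ↦ by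
    rw [Set.mem_ofPred_eq, Set.mem_ofPred_eq, ← abs_eq_zero, abs_digitWalk_flipExcursions, abs_eq_zero]

instance : Uncountable (ℕ → Bool) :=
  not_countable_iff.1 <| by
    rw [← Cardinal.mk_le_aleph0_iff, not_le]
    simpa using Cardinal.cantor Cardinal.aleph0

theorem mapsTo_digits_localLevelSet {x : ℝ} (hx : 0 ≤ x) :
    MapsTo (Real.digits · 2) (LocalLevelSet x)
      {a | ∀ k, |digitWalk a k| = |digitWalk (Real.digits x 2) k|} :=
  fun _ hx' k ↦ by rw [← D_eq_digitWalk hx'.1.1, ← D_eq_digitWalk hx, hx'.2 k]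

theorem digits_ofDigits_two {a : ℕ → Fin 2} (ha : ∀ N, ∃ n ≥ N, a n = 0) :
    Real.digits (Real.ofDigits a) 2 = a :=
  Real.digits_ofDigits fun N ↦ (ha N).imp fun _ ⟨hn, h0⟩ ↦ ⟨hn, by simp [h0]⟩

theorem ofDigits_mem_localLevelSet {x : ℝ} (hx : 0 ≤ x) {a : ℕ → Fin 2}
    (ha : ∀ N, ∃ n ≥ N, a n = 0) (hax : ∀ k, |digitWalk a k| = |digitWalk (Real.digits x 2) k|) :
    Real.ofDigits a ∈ LocalLevelSet x := by
  obtain ⟨n, -, hn⟩ := ha 0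
  refine ⟨⟨Real.ofDigits_nonneg a, Real.ofDigits_lt_one (n := n) (by simp [hn])⟩, fun k ↦ ?_⟩
  rw [D_eq_digitWalk (Real.ofDigits_nonneg a), digits_ofDigits_two ha, D_eq_digitWalk hx, hax]

theorem local_level_set_finite_or_uncountable (x : ℝ) (hx : x ∈ Set.Ico (0:ℝ) 1) :
    ({j : ℕ | D j x = 0}.Finite → (LocalLevelSet x).Finite) ∧
    ({j : ℕ | D j x = 0}.Infinite → ¬ (LocalLevelSet x).Countable) := by
  set w := Real.digits x 2
  have hzeros : {j : ℕ | D j x = 0} = {k | digitWalk w k = 0} := by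
    simp only [D_eq_digitWalk hx.1, w]
  rw [hzeros]
  refine ⟨fun hfin ↦ ?_, fun hinf hcount ↦ ?_⟩
  · exact (finite_setOf_abs_digitWalk_eq hfin).of_injOn (mapsTo_digits_localLevelSet hx.1)
      ((Real.injOn_digits one_lt_two).mono fun _ h ↦ h.1)
  · have hfreq := exists_ge_flipExcursions_eq_zero hinf
    let f : (ℕ → Bool) → LocalLevelSet x := fun b ↦
      ⟨_, ofDigits_mem_localLevelSet hx.1 (hfreq b) (abs_digitWalk_flipExcursions w b)⟩
    have hf : f.Injective := fun b b' h ↦ flipExcursions_injective hinf <| by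
      simpa only [f, digits_ofDigits_two (hfreq _)] using congrArg (Real.digits ·.1 2) h
    have := hcount.to_subtype
    exact not_injective_uncountable_countable f hf
end

section
/- The Takagi function T is monotone on no subinterval of [0,1]. -/
set_option linter.unusedVariables false


open Set

lemma phi_int (j : ℤ) : phi (j : ℝ) = 0 := by
  simp [phi, Int.fract_intCast]

lemma phi_int_add (j : ℤ) (u : ℝ) : phi ((j : ℝ) + u) = phi u := by
  simp [phi, Int.fract_intCast_add]

lemma phi_neg (x : ℝ) : phi (-x) = phi x := by
  by_cases h : Int.fract x = 0
  · simp [phi, Int.fract_neg_eq_zero.mpr h, h]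
  · rw [phi, phi, Int.fract_neg h]
    rw [min_comm]
    ring_nf
  
lemma phi_eq_self {x : ℝ} (h0 : 0 ≤ x) (h1 : x ≤ 1/2) : phi x = x := by
  have hf : Int.fract x = x := Int.fract_eq_self.mpr ⟨h0, by linarith⟩
  rw [phi, hf, min_eq_left (by linarith)]

lemma phi_le_abs (x : ℝ) (k : ℤ) : phi x ≤ |x - k| := by
  have h1 : Int.fract x = x - ⌊x⌋ := rfl
  have h2 : (0:ℝ) ≤ Int.fract x := Int.fract_nonneg x
  have h3 : Int.fract x < 1 := Int.fract_lt_one x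
  rcases le_or_gt k ⌊x⌋ with h | h
  · have : (k:ℝ) ≤ ⌊x⌋ := by exact_mod_cast h
    have : Int.fract x ≤ x - k := by rw [h1]; linarith
    calc phi x ≤ Int.fract x := min_le_left _ _
    _ ≤ x - k := this
    _ ≤ |x - k| := le_abs_self _
  · have : (⌊x⌋:ℝ) + 1 ≤ k := by exact_mod_cast h
    have : 1 - Int.fract x ≤ k - x := by rw [h1]; linarith
    calc phi x ≤ 1 - Int.fract x := min_le_right _ _
    _ ≤ k - x := this
    _ = -(x - k) := by ring
    _ ≤ |x - k| := neg_le_abs _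

lemma phi_lip (x y : ℝ) : phi x ≤ |x - y| + phi y := by
  by_cases h : Int.fract y ≤ 1/2
  · have hy : phi y = |y - ⌊y⌋| := by
      rw [phi, min_eq_left (by linarith)]
      have h1 : Int.fract y = y - ⌊y⌋ := rfl
      rw [abs_of_nonneg (by linarith [Int.fract_nonneg y])]
      linarith
    calc phi x ≤ |x - ⌊y⌋| := phi_le_abs x ⌊y⌋
    _ ≤ |x - y| + |y - ⌊y⌋| := abs_sub_le _ _ _
    _ = |x - y| + phi y := by rw [hy]
  · have hy : phi y = |y - (⌊y⌋ + 1 : ℤ)| := by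
      rw [phi, min_eq_right (by linarith)]
      have h1 : Int.fract y = y - ⌊y⌋ := rfl
      have h3 : Int.fract y < 1 := Int.fract_lt_one y
      rw [abs_of_nonpos (by push_cast; linarith)]
      push_cast
      linarith
    calc phi x ≤ |x - (⌊y⌋ + 1 : ℤ)| := phi_le_abs x _
    _ ≤ |x - y| + |y - (⌊y⌋ + 1 : ℤ)| := abs_sub_le _ _ _
    _ = |x - y| + phi y := by rw [hy]

lemma T_neg (x : ℝ) : T (-x) = T x := by
  unfold T
  apply tsum_congr
  intro n
  rw [show (2:ℝ)^n * -x = -(2^n * x) by ring, phi_neg]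

lemma T_dyadic_sum (N : ℕ) (x : ℝ) (j : ℤ) (h : (2:ℝ)^N * x = j) :
    T x = ∑ i ∈ Finset.range N, (1/2 : ℝ)^i * phi (2^i * x) := by
  unfold T
  apply tsum_eq_sum
  intro i hi
  have hNi : N ≤ i := by simpa using hi
  have hx : (2:ℝ)^i * x = ((2^(i-N) * j : ℤ) : ℝ) := by
    push_cast
    rw [← h, ← mul_assoc, ← pow_add, Nat.sub_add_cancel hNi]
  rw [hx, phi_int, mul_zero]

lemma key1 (n m : ℕ) (hnm : n < m) (k : ℤ) :
    T ((k:ℝ)/2^n) < T ((k:ℝ)/2^n + (1/2)^(n+m)) := by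
  set N := n + m with hN
  set x : ℝ := (k:ℝ)/2^n with hxdef
  set y : ℝ := x + (1/2)^N with hydef
  have h2n : (2:ℝ)^n ≠ 0 := by positivity
  have hx2 : (2:ℝ)^N * x = ((k * 2^m : ℤ) : ℝ) := by
    rw [hxdef, hN]
    push_cast
    field_simp
    ring
  have hy2 : (2:ℝ)^N * y = ((k * 2^m + 1 : ℤ) : ℝ) := by
    rw [hydef, mul_add, hx2]
    push_cast
    rw [← mul_pow]
    norm_num
  rw [T_dyadic_sum N x _ hx2, T_dyadic_sum N y _ hy2, ← sub_pos,
    ← Finset.sum_sub_distrib, Finset.range_eq_Ico,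
    ← Finset.sum_Ico_consecutive _ (Nat.zero_le n) (by omega : n ≤ N)]
  have hB : ∀ i ∈ Finset.Ico n N,
      (1/2:ℝ)^i * phi (2^i * y) - (1/2:ℝ)^i * phi (2^i * x) = (1/2:ℝ)^N := by
    intro i hi
    obtain ⟨hni, hiN⟩ := Finset.mem_Ico.mp hi
    have hpow : (2:ℝ)^i = 2^(i-n) * 2^n := by
      rw [← pow_add, Nat.sub_add_cancel hni]
    have hxi : (2:ℝ)^i * x = ((k * 2^(i-n) : ℤ) : ℝ) := by
      rw [hxdef, hpow]
      push_cast
      field_simp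
    have hsplit : (1/2:ℝ)^N = (1/2)^i * (1/2)^(N-i) := by
      rw [← pow_add, Nat.add_sub_cancel' (le_of_lt hiN)]
    have h2i : (2:ℝ)^i * (1/2)^i = 1 := by
      rw [← mul_pow]; norm_num
    have hyi : (2:ℝ)^i * y = ((k * 2^(i-n) : ℤ) : ℝ) + (1/2)^(N-i) := by
      rw [hydef, mul_add, hxi, hsplit, ← mul_assoc, h2i, one_mul]
    have hNi1 : 1 ≤ N - i := by omega
    have hle : ((1:ℝ)/2)^(N-i) ≤ 1/2 := by
      calc ((1:ℝ)/2)^(N-i) ≤ (1/2)^1 :=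
        pow_le_pow_of_le_one (by norm_num) (by norm_num) hNi1
      _ = 1/2 := pow_one _
    rw [hxi, hyi, phi_int_add, phi_int,
      phi_eq_self (by positivity) hle, mul_zero, sub_zero, hsplit]
  rw [Finset.sum_congr rfl hB, Finset.sum_const, Nat.card_Ico]
  have hA : ∀ i ∈ Finset.Ico 0 n,
      -(1/2:ℝ)^N ≤ (1/2:ℝ)^i * phi (2^i * y) - (1/2:ℝ)^i * phi (2^i * x) := by
    intro i hi
    obtain ⟨_, hin⟩ := Finset.mem_Ico.mp hi
    have hlip := phi_lip (2^i * x) (2^i * y)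
    have habs : |2^i * x - 2^i * y| = (2:ℝ)^i * (1/2)^N := by
      rw [show (2:ℝ)^i * x - 2^i * y = -(2^i * (1/2)^N) by rw [hydef]; ring,
        abs_neg, abs_of_nonneg (by positivity)]
    rw [habs] at hlip
    have h2i : (2:ℝ)^i * (1/2)^i = 1 := by
      rw [← mul_pow]; norm_num
    have hp : (0:ℝ) < (1/2)^i := by positivity
    have hmul := mul_le_mul_of_nonneg_left hlip (le_of_lt hp)
    rw [mul_add, ← mul_assoc, mul_comm ((1/2:ℝ)^i) ((2:ℝ)^i), h2i, one_mul] at hmul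
    linarith
  have hAsum := Finset.card_nsmul_le_sum _ _ _ hA
  rw [Nat.card_Ico] at hAsum
  have hcard : N - n = m := by omega
  rw [hcard]
  have hposN : (0:ℝ) < (1/2)^N := by positivity
  have hn' : (n:ℝ) < m := by exact_mod_cast hnm
  simp only [nsmul_eq_mul, Nat.sub_zero, smul_eq_mul] at hAsum ⊢
  nlinarith [hAsum]

lemma key2 (n m : ℕ) (hnm : n < m) (k : ℤ) :
    T ((k:ℝ)/2^n) < T ((k:ℝ)/2^n - (1/2)^(n+m)) := by
  have h := key1 n m hnm (-k)
  have e1 : T (((-k : ℤ):ℝ)/2^n) = T ((k:ℝ)/2^n) := by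
    rw [show ((-k : ℤ):ℝ)/2^n = -((k:ℝ)/2^n) by push_cast; ring, T_neg]
  have e2 : T (((-k : ℤ):ℝ)/2^n + (1/2)^(n+m)) = T ((k:ℝ)/2^n - (1/2)^(n+m)) := by
    rw [show ((-k : ℤ):ℝ)/2^n + (1/2)^(n+m) = -((k:ℝ)/2^n - (1/2)^(n+m)) by push_cast; ring,
      T_neg]
  rw [e1, e2] at h
  exact h

theorem takagi_monotone_on_no_interval (a b : ℝ)
    (ha : 0 ≤ a) (hab : a < b) (hb : b ≤ 1) :
    ¬ MonotoneOn T (Set.Icc a b) ∧ ¬ AntitoneOn T (Set.Icc a b) := by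
  obtain ⟨n, hn⟩ := exists_pow_lt_of_lt_one (by linarith : (0:ℝ) < (b - a)/2)
    (by norm_num : (1/2 : ℝ) < 1)
  set k : ℤ := ⌊a * 2^n⌋ + 1 with hk
  set p : ℝ := (k:ℝ)/2^n with hp
  have h2n : (0:ℝ) < 2^n := by positivity
  have hhalf : ((1:ℝ)/2)^n = 1/2^n := by rw [div_pow, one_pow]
  have hap : a < p := by
    rw [hp, lt_div_iff₀ h2n, hk]
    push_cast
    exact Int.lt_floor_add_one (a * 2^n)
  have hpa : p ≤ a + (1/2)^n := by
    rw [hp, div_le_iff₀ h2n, hk, hhalf]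
    have := Int.floor_le (a * 2^n)
    push_cast
    field_simp
    linarith
  obtain ⟨m₀, hm₀⟩ := exists_pow_lt_of_lt_one (by linarith : (0:ℝ) < p - a)
    (by norm_num : (1/2 : ℝ) < 1)
  set m := max m₀ (n+1) with hm
  have hnm : n < m := lt_of_lt_of_le (Nat.lt_succ_self n) (le_max_right _ _)
  set δ : ℝ := (1/2)^(n+m) with hδ
  have hδpos : 0 < δ := by positivity
  have hδsmall : δ < p - a := by
    calc δ ≤ (1/2:ℝ)^m₀ := by
          apply pow_le_pow_of_le_one (by norm_num) (by norm_num)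
          omega
    _ < p - a := hm₀
  have hδn : δ ≤ (1/2:ℝ)^n := by
    apply pow_le_pow_of_le_one (by norm_num) (by norm_num)
    omega
  have hwb : p + δ ≤ b := by
    have : (1/2:ℝ)^n < (b-a)/2 := hn
    linarith
  have hup : p - δ < p := by linarith
  have humem : p - δ ∈ Set.Icc a b := ⟨by linarith, by linarith⟩
  have hpmem : p ∈ Set.Icc a b := ⟨le_of_lt hap, by linarith⟩
  have hwmem : p + δ ∈ Set.Icc a b := ⟨by linarith, hwb⟩
  have hT1 : T p < T (p + δ) := key1 n m hnm k
  have hT2 : T p < T (p - δ) := key2 n m hnm k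
  constructor
  · intro h
    have := h humem hpmem (by linarith)
    linarith
  · intro h
    have := h hpmem hwmem (by linarith)
    linarith
end

section
/- For any continuous function f : [0,1] → ℝ that is monotone on no interval, the set of values y in the range of f for which the level set f^{-1}(y) is a perfect set is residual in the range of f (Garg's theorem). -/
open Set

open Topology Filter
def Cross (g : ℝ → ℝ) (a b : ℝ) : Set ℝ :=
  {y | ∃ x, 0 ≤ a ∧ b ≤ 1 ∧ a < x ∧ x < b ∧
    (∀ t, a < t → t < x → g t < y) ∧ (∀ t, x < t → t < b → y < g t)}

lemma cross_val {g : ℝ → ℝ} (hg : ContinuousOn g (Icc 0 1)) {a b x y : ℝ}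
    (h0 : 0 ≤ a) (hb1 : b ≤ 1) (hax : a < x) (hxb : x < b)
    (hl : ∀ t, a < t → t < x → g t < y) (hr : ∀ t, x < t → t < b → y < g t) :
    g x = y := by
  have hc : ContinuousAt g x :=
    hg.continuousAt (Icc_mem_nhds (by linarith) (by linarith))
  have h1 : g x ≤ y := by
    have ht : Filter.Tendsto g (𝓝[<] x) (𝓝 (g x)) := hc.tendsto.mono_left nhdsWithin_le_nhds
    have hev : ∀ᶠ t in 𝓝[<] x, g t ≤ y := by
      filter_upwards [Ioo_mem_nhdsLT hax] with t ht
      exact (hl t ht.1 ht.2).le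
    exact le_of_tendsto ht hev
  have h2 : y ≤ g x := by
    have ht : Filter.Tendsto g (𝓝[>] x) (𝓝 (g x)) := hc.tendsto.mono_left nhdsWithin_le_nhds
    have hev : ∀ᶠ t in 𝓝[>] x, y ≤ g t := by
      filter_upwards [Ioo_mem_nhdsGT hxb] with t ht
      exact (hr t ht.1 ht.2).le
    exact ge_of_tendsto ht hev
  linarith

lemma cross_mono {g : ℝ → ℝ} (hg : ContinuousOn g (Icc 0 1)) {a b x x' y y' : ℝ}
    (hx : a < x ∧ x < b ∧
      (∀ t, a < t → t < x → g t < y) ∧ (∀ t, x < t → t < b → y < g t))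
    (hx' : a < x' ∧ x' < b ∧
      (∀ t, a < t → t < x' → g t < y') ∧ (∀ t, x' < t → t < b → y' < g t))
    (h0 : 0 ≤ a) (hb1 : b ≤ 1) (hyy : y < y') : x < x' := by
  obtain ⟨hax, hxb, hl, hr⟩ := hx
  obtain ⟨hax', hxb', hl', hr'⟩ := hx'
  by_contra hc
  push_neg at hc
  rcases eq_or_lt_of_le hc with heq | hlt
  · have e1 : g x = y := cross_val hg h0 hb1 hax hxb hl hr
    have e2 : g x' = y' := cross_val hg h0 hb1 hax' hxb' hl' hr'
    rw [heq] at e2; linarith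
  · have h1 : g ((x' + x) / 2) < y := hl _ (by linarith) (by linarith)
    have h2 : y' < g ((x' + x) / 2) := hr' _ (by linarith) (by linarith)
    linarith

lemma cross_nwd {g : ℝ → ℝ} (hg : ContinuousOn g (Icc 0 1))
    (hm : ∀ a b : ℝ, 0 ≤ a → a < b → b ≤ 1 → ¬ MonotoneOn g (Icc a b))
    (a b : ℝ) : IsNowhereDense (Cross g a b) := by
  rw [IsNowhereDense, eq_empty_iff_forall_notMem]
  intro z hz
  rw [mem_interior_iff_mem_nhds, Metric.mem_nhds_iff] at hz
  obtain ⟨δ, hδ, hball⟩ := hz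
  -- density of Cross in (z-δ, z+δ)
  have hdense : ∀ u v : ℝ, z - δ < u → u < v → v < z + δ →
      ∃ y ∈ Cross g a b, u < y ∧ y < v := by
    intro u v hu huv hv
    have hw : (u + v) / 2 ∈ closure (Cross g a b) := by
      apply hball
      rw [Metric.mem_ball, Real.dist_eq, abs_lt]
      constructor <;> linarith
    rw [_root_.mem_closure_iff] at hw
    obtain ⟨y, hy, hyC⟩ := hw (Ioo u v) isOpen_Ioo ⟨by linarith, by linarith⟩
    exact ⟨y, hyC, hy.1, hy.2⟩
  obtain ⟨y₁, hy₁C, hy₁l, hy₁r⟩ := hdense (z - δ/2) z (by linarith) (by linarith) (by linarith)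
  obtain ⟨y₂, hy₂C, hy₂l, hy₂r⟩ := hdense y₁ z (by linarith) (by linarith) (by linarith)
  obtain ⟨x₁, h0a, hb1, hx₁⟩ := hy₁C
  obtain ⟨x₂, -, -, hx₂⟩ := hy₂C
  have hx12 : x₁ < x₂ := cross_mono hg hx₁ hx₂ h0a hb1 hy₂l
  have hgx₁ : g x₁ = y₁ := cross_val hg h0a hb1 hx₁.1 hx₁.2.1 hx₁.2.2.1 hx₁.2.2.2
  have hgx₂ : g x₂ = y₂ := cross_val hg h0a hb1 hx₂.1 hx₂.2.1 hx₂.2.2.1 hx₂.2.2.2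
  -- bounds: for s ∈ [x₁, x₂], y₁ ≤ g s ≤ y₂
  have hbnd : ∀ s ∈ Icc x₁ x₂, y₁ ≤ g s ∧ g s ≤ y₂ := by
    rintro s ⟨hs1, hs2⟩
    constructor
    · rcases eq_or_lt_of_le hs1 with h | h
      · rw [← h, hgx₁]
      · exact (hx₁.2.2.2 s h (by linarith [hx₂.2.1])).le
    · rcases eq_or_lt_of_le hs2 with h | h
      · rw [h, hgx₂]
      · exact (hx₂.2.2.1 s (by linarith [hx₁.1]) h).le
  have hmon : MonotoneOn g (Icc x₁ x₂) := by
    rintro s hs t ht hst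
    by_contra hgt
    push_neg at hgt
    obtain ⟨hs1, hs2⟩ := hbnd s hs
    obtain ⟨ht1, ht2⟩ := hbnd t ht
    obtain ⟨y, hyC, hyl, hyr⟩ := hdense (g t) (g s) (by linarith) hgt (by linarith)
    obtain ⟨x, -, -, hx⟩ := hyC
    have hxx₁ : x₁ < x := cross_mono hg hx₁ hx h0a hb1 (by linarith)
    have hxx₂ : x < x₂ := cross_mono hg hx hx₂ h0a hb1 (by linarith)
    rcases lt_or_ge s x with h | h
    · have : g s < y := hx.2.2.1 s (by linarith [hx₁.1, hs.1]) h
      linarith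
    · have hst' : s < t := lt_of_le_of_ne hst (by rintro rfl; exact absurd rfl (ne_of_gt hgt))
      have : y < g t := hx.2.2.2 t (by linarith) (by linarith [hx₂.2.1, ht.2])
      linarith
  exact hm x₁ x₂ (by linarith [hx₁.1]) hx12 (by linarith [hx₂.2.1]) hmon

lemma nwd_neg {s : Set ℝ} (h : IsNowhereDense s) :
    IsNowhereDense ((fun y : ℝ => -y) ⁻¹' s) := by
  have e : (fun y : ℝ => -y) ⁻¹' s = (Homeomorph.neg ℝ) ⁻¹' s := rfl
  rw [IsNowhereDense, e, ← Homeomorph.preimage_closure, ← Homeomorph.preimage_interior, h,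
    preimage_empty]

lemma sign_const {g : ℝ → ℝ} (hg : ContinuousOn g (Icc 0 1)) {I : Set ℝ}
    (hI : I ⊆ Icc 0 1) (hconn : OrdConnected I) {y : ℝ} (hne : ∀ t ∈ I, g t ≠ y) :
    (∀ t ∈ I, g t < y) ∨ (∀ t ∈ I, y < g t) := by
  by_contra h
  push_neg at h
  obtain ⟨⟨t1, ht1, h1⟩, ⟨t2, ht2, h2⟩⟩ := h
  have hsub : uIcc t1 t2 ⊆ I := hconn.uIcc_subset ht1 ht2
  have := intermediate_value_uIcc (hg.mono (hsub.trans hI))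
  have hy : y ∈ uIcc (g t1) (g t2) := by
    rw [mem_uIcc]; right; exact ⟨h2, h1⟩
  obtain ⟨t, ht, hgt⟩ := this hy
  exact hne t (hsub ht) hgt

lemma nwd_sub {m M : ℝ} (hmM : m < M) {K : Set ℝ} (hK : K = Icc m M) {s : Set ℝ}
    (hs : IsNowhereDense s) : IsNowhereDense ((Subtype.val : K → ℝ) ⁻¹' s) := by
  have hsub1 : closure ((Subtype.val : K → ℝ) ⁻¹' s) ⊆ Subtype.val ⁻¹' (closure s) :=
    continuous_subtype_val.closure_preimage_subset s
  rw [IsNowhereDense, eq_empty_iff_forall_notMem]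
  intro z hz
  have hz' : z ∈ interior (Subtype.val ⁻¹' (closure s)) :=
    interior_mono hsub1 hz
  obtain ⟨U, hUopen, hUsub, hzU⟩ : ∃ U : Set ℝ, IsOpen U ∧
      (Subtype.val ⁻¹' U : Set K) ⊆ Subtype.val ⁻¹' (closure s) ∧ (z : ℝ) ∈ U := by
    have := isOpen_interior (s := (Subtype.val ⁻¹' (closure s) : Set K))
    rw [isOpen_induced_iff] at this
    obtain ⟨U, hU, hUeq⟩ := this
    exact ⟨U, hU, by rw [hUeq]; exact interior_subset, by rw [← mem_preimage, hUeq]; exact hz'⟩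
  have hKsub : U ∩ K ⊆ closure s := by
    rintro u ⟨hu1, hu2⟩
    exact hUsub (show (⟨u, hu2⟩ : K).1 ∈ U from hu1)
  obtain ⟨δ, hδ, hball⟩ := Metric.isOpen_iff.mp hUopen z hzU
  have hzK : (z : ℝ) ∈ Icc m M := hK ▸ z.2
  -- produce a nondegenerate interval inside U ∩ Icc m M
  obtain ⟨u, v, huv, hIoo⟩ : ∃ u v : ℝ, u < v ∧ Ioo u v ⊆ U ∩ Icc m M := by
    rcases lt_or_eq_of_le hzK.2 with h | h
    · refine ⟨(z:ℝ), min ((z:ℝ) + δ) M, by simp [h, hδ], ?_⟩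
      rintro t ⟨ht1, ht2⟩
      have h1 : t < (z:ℝ) + δ := lt_of_lt_of_le ht2 (min_le_left _ _)
      have h2 : t < M := lt_of_lt_of_le ht2 (min_le_right _ _)
      exact ⟨hball (by rw [Metric.mem_ball, Real.dist_eq, abs_lt]; constructor <;> linarith),
        le_of_lt (lt_of_le_of_lt hzK.1 ht1), h2.le⟩
    · refine ⟨max ((z:ℝ) - δ) m, (z:ℝ), max_lt (by linarith) (lt_of_lt_of_eq hmM h.symm), ?_⟩
      rintro t ⟨ht1, ht2⟩
      have h1 : (z:ℝ) - δ < t := lt_of_le_of_lt (le_max_left _ _) ht1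
      have h2 : m < t := lt_of_le_of_lt (le_max_right _ _) ht1
      exact ⟨hball (by rw [Metric.mem_ball, Real.dist_eq, abs_lt]; constructor <;> linarith),
        h2.le, le_of_lt (lt_of_lt_of_le ht2 hzK.2)⟩
  have : Ioo u v ⊆ interior (closure s) :=
    interior_maximal (fun t ht => hKsub ⟨(hIoo ht).1, hK ▸ (hIoo ht).2⟩) isOpen_Ioo
  rw [hs] at this
  exact (nonempty_Ioo.mpr huv).ne_empty (eq_empty_iff_forall_notMem.mpr fun t ht => this ht)

lemma singleton_nwd (x : ℝ) : IsNowhereDense ({x} : Set ℝ) := by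
  rw [IsNowhereDense, closure_singleton, interior_singleton]

lemma isMeagre_union {X : Type*} [TopologicalSpace X] {s t : Set X}
    (hs : IsMeagre s) (ht : IsMeagre t) : IsMeagre (s ∪ t) := by
  rw [IsMeagre, compl_union]
  exact Filter.inter_mem hs ht

theorem garg_theorem (f : ℝ → ℝ) (hf : ContinuousOn f (Set.Icc (0:ℝ) 1))
    (hmono : ∀ a b : ℝ, 0 ≤ a → a < b → b ≤ 1 →
      ¬ MonotoneOn f (Set.Icc a b) ∧ ¬ AntitoneOn f (Set.Icc a b)) :
    {y : f '' Set.Icc (0:ℝ) 1 |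
        Perfect {x ∈ Set.Icc (0:ℝ) 1 | f x = y.1} ∧
        {x ∈ Set.Icc (0:ℝ) 1 | f x = y.1}.Nonempty} ∈
      residual (f '' Set.Icc (0:ℝ) 1) := by
  have hKc : IsCompact (f '' Icc (0:ℝ) 1) := isCompact_Icc.image_of_continuousOn hf
  have hKconn : IsConnected (f '' Icc (0:ℝ) 1) :=
    ⟨(nonempty_Icc.mpr zero_le_one).image f, (isPreconnected_Icc).image f hf⟩
  have hK : f '' Icc (0:ℝ) 1 = Icc (sInf (f '' Icc (0:ℝ) 1)) (sSup (f '' Icc (0:ℝ) 1)) :=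
    eq_Icc_of_connected_compact hKconn hKc
  set m := sInf (f '' Icc (0:ℝ) 1) with hm
  set M := sSup (f '' Icc (0:ℝ) 1) with hM
  have hmM : m < M := by
    by_contra h
    push_neg at h
    have hc : ∀ x ∈ Icc (0:ℝ) 1, f x = m := by
      intro x hx
      have : f x ∈ Icc m M := hK ▸ mem_image_of_mem f hx
      exact le_antisymm (this.2.trans h) this.1
    exact (hmono 0 1 le_rfl one_pos le_rfl).1
      (fun x hx y hy _ => by rw [hc x hx, hc y hy])
  have hmneg : ∀ a b : ℝ, 0 ≤ a → a < b → b ≤ 1 → ¬ MonotoneOn (fun t => -f t) (Icc a b) := by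
    intro a b h1 h2 h3 hmon
    refine (hmono a b h1 h2 h3).2 (fun x hx y hy hxy => ?_)
    have := hmon hx hy hxy
    simpa using this
  have hmpos : ∀ a b : ℝ, 0 ≤ a → a < b → b ≤ 1 → ¬ MonotoneOn f (Icc a b) :=
    fun a b h1 h2 h3 => (hmono a b h1 h2 h3).1
  -- the four countable families of nowhere dense bad sets
  set N1 : ℚ × ℚ → Set ℝ := fun p => {sSup (f '' Icc (p.1:ℝ) (p.2:ℝ))} with hN1
  set N2 : ℚ × ℚ → Set ℝ := fun p => {sInf (f '' Icc (p.1:ℝ) (p.2:ℝ))} with hN2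
  set N3 : ℚ × ℚ → Set ℝ := fun p => Cross f (p.1:ℝ) (p.2:ℝ) with hN3
  set N4 : ℚ × ℚ → Set ℝ := fun p =>
    (fun y : ℝ => -y) ⁻¹' Cross (fun t => -f t) (p.1:ℝ) (p.2:ℝ) with hN4
  have hmeagre : ∀ N : ℚ × ℚ → Set ℝ, (∀ p, IsNowhereDense (N p)) →
      IsMeagre (⋃ p, ((Subtype.val : (f '' Icc (0:ℝ) 1) → ℝ) ⁻¹' N p)) := by
    intro N hN
    rw [isMeagre_iff_countable_union_isNowhereDense]
    refine ⟨Set.range (fun p => (Subtype.val ⁻¹' N p :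
        Set (f '' Icc (0:ℝ) 1))), ?_, countable_range _, ?_⟩
    · rintro t ⟨p, rfl⟩
      exact nwd_sub hmM hK (hN p)
    · rw [sUnion_range]
  have hB1 := hmeagre N1 (fun p => singleton_nwd _)
  have hB2 := hmeagre N2 (fun p => singleton_nwd _)
  have hB3 := hmeagre N3 (fun p => cross_nwd hf hmpos _ _)
  have hB4 := hmeagre N4 (fun p => nwd_neg (cross_nwd (hf.neg) hmneg _ _))
  have hBad := isMeagre_union (isMeagre_union hB1 hB2) (isMeagre_union hB3 hB4)
  rw [IsMeagre] at hBad
  refine Filter.mem_of_superset hBad ?_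
  rintro y hy
  simp only [compl_union, mem_inter_iff, mem_compl_iff, mem_iUnion, mem_preimage,
    not_exists] at hy
  obtain ⟨⟨hy1, hy2⟩, hy3, hy4⟩ := hy
  obtain ⟨x₀, hx₀, hfx₀⟩ := y.2
  have hNonempty : {x ∈ Icc (0:ℝ) 1 | f x = y.1}.Nonempty := ⟨x₀, hx₀, hfx₀⟩
  refine ⟨⟨?_, ?_⟩, hNonempty⟩
  · -- closed
    have : {x ∈ Icc (0:ℝ) 1 | f x = y.1} = Icc (0:ℝ) 1 ∩ f ⁻¹' {y.1} := by
      ext t; simp [mem_preimage]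
    rw [this]
    exact hf.preimage_isClosed_of_isClosed isClosed_Icc isClosed_singleton
  · -- preperfect
    intro x hx
    rw [accPt_iff_nhds]
    by_contra hcon
    push_neg at hcon
    obtain ⟨U, hU, hUuniq⟩ := hcon
    obtain ⟨ε, hε, hball⟩ := Metric.mem_nhds_iff.mp hU
    have hiso : ∀ z ∈ Icc (0:ℝ) 1, f z = y.1 → |z - x| < ε → z = x := by
      intro z h1 h2 h3
      rcases eq_or_ne z x with h | h
      · exact h
      · exact absurd (hUuniq z ⟨hball (by rwa [Metric.mem_ball, Real.dist_eq]), h1, h2⟩) h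
    obtain ⟨hx01, hfx⟩ := hx
    -- right-side sign
    have hR : x < 1 → ∃ b : ℚ, x < (b:ℝ) ∧ (b:ℝ) ≤ 1 ∧
        ((∀ t ∈ Ioc x (b:ℝ), f t < y.1) ∨ (∀ t ∈ Ioc x (b:ℝ), y.1 < f t)) := by
      intro hx1
      obtain ⟨b, hb1, hb2⟩ := exists_rat_btwn (show x < min 1 (x+ε) from
        lt_min hx1 (by linarith))
      have hbl : (b:ℝ) ≤ 1 := le_of_lt (lt_of_lt_of_le hb2 (min_le_left _ _))
      have hbe : (b:ℝ) < x + ε := lt_of_lt_of_le hb2 (min_le_right _ _)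
      refine ⟨b, hb1, hbl, sign_const hf ?_ ordConnected_Ioc ?_⟩
      · rintro t ⟨ht1, ht2⟩
        exact ⟨le_of_lt (lt_of_le_of_lt hx01.1 ht1), le_trans ht2 hbl⟩
      · rintro t ⟨ht1, ht2⟩ hft
        have ht01 : t ∈ Icc (0:ℝ) 1 := ⟨le_of_lt (lt_of_le_of_lt hx01.1 ht1), le_trans ht2 hbl⟩
        have := hiso t ht01 hft (by rw [abs_lt]; constructor <;> linarith)
        linarith [this ▸ ht1]
    -- left-side sign
    have hL : 0 < x → ∃ a : ℚ, (a:ℝ) < x ∧ 0 ≤ (a:ℝ) ∧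
        ((∀ t ∈ Ico (a:ℝ) x, f t < y.1) ∨ (∀ t ∈ Ico (a:ℝ) x, y.1 < f t)) := by
      intro hx0
      obtain ⟨a, ha1, ha2⟩ := exists_rat_btwn (show max 0 (x - ε) < x from
        max_lt hx0 (by linarith))
      have hal : 0 ≤ (a:ℝ) := le_of_lt (lt_of_le_of_lt (le_max_left _ _) ha1)
      have hae : x - ε < (a:ℝ) := lt_of_le_of_lt (le_max_right _ _) ha1
      refine ⟨a, ha2, hal, sign_const hf ?_ ordConnected_Ico ?_⟩
      · rintro t ⟨ht1, ht2⟩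
        exact ⟨le_trans hal ht1, le_of_lt (lt_of_lt_of_le ht2 hx01.2)⟩
      · rintro t ⟨ht1, ht2⟩ hft
        have ht01 : t ∈ Icc (0:ℝ) 1 := ⟨le_trans hal ht1, le_of_lt (lt_of_lt_of_le ht2 hx01.2)⟩
        have := hiso t ht01 hft (by rw [abs_lt]; constructor <;> linarith)
        linarith [this ▸ ht2]
    -- helper to conclude y.1 = sSup / sInf over a rational interval containing x
    have hSup : ∀ a b : ℚ, (a:ℝ) ≤ x → x ≤ (b:ℝ) → (∀ t ∈ Icc (a:ℝ) (b:ℝ), f t ≤ y.1) →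
        y.1 = sSup (f '' Icc (a:ℝ) (b:ℝ)) := by
      intro a b hax hxb hbound
      have hmem : y.1 ∈ f '' Icc (a:ℝ) (b:ℝ) := ⟨x, ⟨hax, hxb⟩, hfx⟩
      have hub : y.1 ∈ upperBounds (f '' Icc (a:ℝ) (b:ℝ)) := by
        rintro w ⟨t, ht, rfl⟩; exact hbound t ht
      exact le_antisymm (le_csSup ⟨y.1, hub⟩ hmem) (csSup_le ⟨y.1, hmem⟩ hub)
    have hInf : ∀ a b : ℚ, (a:ℝ) ≤ x → x ≤ (b:ℝ) → (∀ t ∈ Icc (a:ℝ) (b:ℝ), y.1 ≤ f t) →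
        y.1 = sInf (f '' Icc (a:ℝ) (b:ℝ)) := by
      intro a b hax hxb hbound
      have hmem : y.1 ∈ f '' Icc (a:ℝ) (b:ℝ) := ⟨x, ⟨hax, hxb⟩, hfx⟩
      have hlb : y.1 ∈ lowerBounds (f '' Icc (a:ℝ) (b:ℝ)) := by
        rintro w ⟨t, ht, rfl⟩; exact hbound t ht
      exact le_antisymm (le_csInf ⟨y.1, hmem⟩ hlb) (csInf_le ⟨y.1, hlb⟩ hmem)
    -- turn side signs into membership in one of the bad sets
    have hiocR : ∀ (b : ℚ), x ≤ (b:ℝ) → ∀ t ∈ Icc x (b:ℝ), t ≠ x → t ∈ Ioc x (b:ℝ) :=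
      fun b hb t ht hne => ⟨lt_of_le_of_ne ht.1 (Ne.symm hne), ht.2⟩
    rcases eq_or_lt_of_le hx01.1 with hx0 | hx0
    · -- x = 0
      obtain ⟨b, hb1, hb2, hsgn⟩ := hR (by rw [← hx0]; norm_num)
      have hax : ((0:ℚ):ℝ) ≤ x := by rw [← hx0]; norm_num
      rcases hsgn with hs | hs
      · refine hy1 (0, b) ?_
        simp only [hN1, mem_singleton_iff]
        refine hSup 0 b hax hb1.le ?_
        rintro t ⟨ht1, ht2⟩
        rcases eq_or_lt_of_le (show x ≤ t from by rw [← hx0]; exact le_trans (by norm_num) ht1) with h | h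
        · rw [← h, hfx]
        · exact (hs t ⟨h, ht2⟩).le
      · refine hy2 (0, b) ?_
        simp only [hN2, mem_singleton_iff]
        refine hInf 0 b hax hb1.le ?_
        rintro t ⟨ht1, ht2⟩
        rcases eq_or_lt_of_le (show x ≤ t from by rw [← hx0]; exact le_trans (by norm_num) ht1) with h | h
        · rw [← h, hfx]
        · exact (hs t ⟨h, ht2⟩).le
    · rcases eq_or_lt_of_le hx01.2 with hx1 | hx1
      · -- x = 1
        obtain ⟨a, ha1, ha2, hsgn⟩ := hL hx0
        have hxb : x ≤ ((1:ℚ):ℝ) := by rw [hx1]; norm_num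
        rcases hsgn with hs | hs
        · refine hy1 (a, 1) ?_
          simp only [hN1, mem_singleton_iff]
          refine hSup a 1 ha1.le hxb ?_
          rintro t ⟨ht1, ht2⟩
          rcases eq_or_lt_of_le (le_trans ht2 (show ((1:ℚ):ℝ) ≤ x from by rw [hx1]; norm_num)) with h | h
          · rw [h, hfx]
          · exact (hs t ⟨ht1, h⟩).le
        · refine hy2 (a, 1) ?_
          simp only [hN2, mem_singleton_iff]
          refine hInf a 1 ha1.le hxb ?_
          rintro t ⟨ht1, ht2⟩
          rcases eq_or_lt_of_le (le_trans ht2 (show ((1:ℚ):ℝ) ≤ x from by rw [hx1]; norm_num)) with h | h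
          · rw [h, hfx]
          · exact (hs t ⟨ht1, h⟩).le
      · -- 0 < x < 1
        obtain ⟨a, ha1, ha2, hsgnL⟩ := hL hx0
        obtain ⟨b, hb1, hb2, hsgnR⟩ := hR hx1
        rcases hsgnL with hsl | hsl <;> rcases hsgnR with hsr | hsr
        · -- both below: y is a max value
          refine hy1 (a, b) ?_
          simp only [hN1, mem_singleton_iff]
          refine hSup a b ha1.le hb1.le ?_
          rintro t ⟨ht1, ht2⟩
          rcases lt_trichotomy t x with h | h | h
          · exact (hsl t ⟨ht1, h⟩).le
          · rw [h, hfx]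
          · exact (hsr t ⟨h, ht2⟩).le
        · -- below left, above right: increasing crossing
          refine hy3 (a, b) ?_
          exact ⟨x, ha2, hb2, ha1, hb1,
            fun t h1 h2 => hsl t ⟨h1.le, h2⟩, fun t h1 h2 => hsr t ⟨h1, h2.le⟩⟩
        · -- above left, below right: decreasing crossing
          refine hy4 (a, b) ?_
          simp only [hN4, mem_preimage]
          refine ⟨x, ha2, hb2, ha1, hb1, fun t h1 h2 => ?_, fun t h1 h2 => ?_⟩
          · have := hsl t ⟨h1.le, h2⟩; simpa using this
          · have := hsr t ⟨h1, h2.le⟩; simpa using this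
        · -- both above: y is a min value
          refine hy2 (a, b) ?_
          simp only [hN2, mem_singleton_iff]
          refine hInf a b ha1.le hb1.le ?_
          rintro t ⟨ht1, ht2⟩
          rcases lt_trichotomy t x with h | h | h
          · exact (hsl t ⟨ht1, h⟩).le
          · rw [h, hfx]
          · exact (hsr t ⟨h, ht2⟩).le
end
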